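/- arXiv:1409.6259 — 2 statements merged into one kernel-verified Lean document; each statement's English description precedes it below -/
import Mathlib

section
/- Let Ω be a compact metric space, T a homeomorphism of Ω, and A: Ω → GL(2,ℂ) continuous with |det A(ω)| = 1. If (T,A) admits no Sacker–Sell solution, then (T,A) exhibits uniform exponential growth: there exist C > 0 and λ > 1 such that ‖Aⁿ(ω)‖ ≥ Cλ^{|n|} for all n ∈ ℤ and ω ∈ Ω. -/
noncomputable section

abbrev E2 := EuclideanSpace ℂ (Fin 2)
abbrev M2 := Matrix (Fin 2) (Fin 2) ℂ

noncomputable def opNorm (M : M2) : ℝ :=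
  ‖Matrix.toEuclideanCLM (𝕜 := ℂ) (n := Fin 2) M‖

noncomputable def mulV (M : M2) (v : E2) : E2 :=
  Matrix.toEuclideanCLM (𝕜 := ℂ) (n := Fin 2) M v

variable {Ω : Type*} [MetricSpace Ω]

noncomputable def fwd (T : Ω ≃ₜ Ω) (A : Ω → M2) : ℕ → Ω → M2
  | 0, _ => 1
  | n + 1, ω => fwd T A n (T ω) * A ω

noncomputable def coc (T : Ω ≃ₜ Ω) (A : Ω → M2) (n : ℤ) (ω : Ω) : M2 :=
  if 0 ≤ n then fwd T A n.toNat ω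
  else (fwd T A (-n).toNat ((⇑T.symm)^[(-n).toNat] ω))⁻¹

/-! Because `|det Aⁿ(ω)| = 1`, every `‖Aⁿ(ω)‖` is at least `1`. Compactness of `Ω × S` (`S` the
unit sphere) makes the absence of Sacker–Sell solutions uniform: there are `N` and `c > 1` such
that every unit vector is stretched by a factor `≥ c` by some `Aᵐ(ω)` with `|m| ≤ N`. Applied to
vectors in the range of `Aⁿ(ω)`, through `Aⁿ⁺ᵐ(ω) = Aᵐ(Tⁿω) Aⁿ(ω)`, this shows that
`h(n) = log ‖Aⁿ(ω)‖` gains `log c` within every window of length `N`. Moreover `h ≥ h(0) = 0` and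
`h` is Lipschitz in `n`. On the integer interval between `0` and `n` the maximum of `h` therefore
sits within `N` of an endpoint, so it is at most `h(n) + O(1)`; climbing from the midpoint for
`|n| / (2N)` steps stays in the interval and reaches height `≳ |n| log c / (2N)`. Hence `h` grows
linearly in `|n|`, with constants independent of `ω`. -/

open scoped NNReal

lemma lipschitzWith_of_dist_succ_le {α : Type*} [PseudoMetricSpace α] {f : ℤ → α} {K : ℝ≥0}
    (hf : ∀ n, dist (f (n + 1)) (f n) ≤ K) : LipschitzWith K f := by
  refine LipschitzWith.of_dist_le_mul fun p q => ?_
  wlog hqp : q ≤ p generalizing p q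
  · rw [dist_comm, dist_comm p]; exact this q p (by omega)
  obtain ⟨k, rfl⟩ := Int.le.dest hqp
  rw [Int.dist_eq, Int.cast_add, add_sub_cancel_left, Int.cast_natCast,
    abs_of_nonneg (by positivity)]
  clear hqp
  induction k with
  | zero => simp
  | succ k ih =>
    calc dist (f (q + ↑(k + 1))) (f q)
        ≤ dist (f (q + k + 1)) (f (q + k)) + dist (f (q + k)) (f q) := by
          rw [Nat.cast_succ, ← add_assoc]; exact dist_triangle _ _ _
      _ ≤ K + K * k := add_le_add (hf _) ih
      _ = K * ↑(k + 1) := by push_cast; ring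

section ScalarGrowth

variable {h : ℤ → ℝ} {K : ℝ≥0} {N : ℕ}

lemma le_max_add_of_forall_exists_lt (hh : LipschitzWith K h)
    (hgain : ∀ n, ∃ m : ℤ, m.natAbs ≤ N ∧ h n < h (n + m)) {a b p : ℤ} (hp : p ∈ Finset.Icc a b) :
    h p ≤ max (h a) (h b) + K * N := by
  obtain ⟨p₀, hp₀, hmax⟩ := (Finset.Icc a b).exists_max_image h ⟨p, hp⟩
  obtain ⟨m, hmN, hm⟩ := hgain p₀
  have hout : p₀ + m ∉ Finset.Icc a b := fun hin => (hm.trans_le (hmax _ hin)).false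
  rw [Finset.mem_Icc] at hp₀ hout
  have near : ∀ e, (p₀ - e).natAbs ≤ N → h p₀ ≤ h e + K * N := fun e he =>
    (hh.le_add_mul p₀ e).trans <| by
      gcongr
      rw [Int.dist_eq, ← Int.cast_sub, ← Int.cast_abs, Int.abs_eq_natAbs, Int.cast_natCast]
      exact_mod_cast he
  refine (hmax p hp).trans ?_
  rcases lt_or_ge (p₀ + m) a with hlt | hge
  · exact (near a (by omega)).trans (by gcongr; exact le_max_left _ _)
  · exact (near b (by omega)).trans (by gcongr; exact le_max_right _ _)

variable {κ : ℝ}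

lemma exists_add_mul_le_of_forall_exists_add_le
    (hgain : ∀ n, ∃ m : ℤ, m.natAbs ≤ N ∧ h n + κ ≤ h (n + m)) (q : ℤ) (i : ℕ) :
    ∃ t, (t - q).natAbs ≤ i * N ∧ h q + i * κ ≤ h t := by
  induction i with
  | zero => exact ⟨q, by simp⟩
  | succ i ih =>
    obtain ⟨t, htq, ht⟩ := ih
    obtain ⟨m, hmN, hm⟩ := hgain t
    refine ⟨t + m, by rw [Nat.succ_mul]; omega, ?_⟩
    push_cast
    linarith

lemma pos_of_forall_exists_add_le (hκ : 0 < κ)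
    (hgain : ∀ n, ∃ m : ℤ, m.natAbs ≤ N ∧ h n + κ ≤ h (n + m)) : 0 < N := by
  obtain ⟨m, hmN, hm⟩ := hgain 0
  refine Nat.pos_of_ne_zero fun hN => ?_
  obtain rfl : m = 0 := by omega
  rw [add_zero] at hm
  linarith

lemma add_mul_natAbs_le_of_forall_exists_add_le (hh : LipschitzWith K h) (hκ : 0 < κ)
    (hgain : ∀ n, ∃ m : ℤ, m.natAbs ≤ N ∧ h n + κ ≤ h (n + m)) (hmin : ∀ n, h 0 ≤ h n) (n : ℤ) :
    h 0 + κ / (2 * N) * n.natAbs ≤ h n + (κ + K * N) := by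
  have hN := pos_of_forall_exists_add_le hκ hgain
  set L := n.natAbs
  set i := L / (2 * N)
  obtain ⟨t, htq, ht⟩ := exists_add_mul_le_of_forall_exists_add_le hgain (min 0 n + (L / 2 : ℕ)) i
  have hiN : 2 * (i * N) ≤ L := by
    rw [Nat.mul_left_comm]; exact Nat.div_mul_le_self L (2 * N)
  have htJ : t ∈ Finset.Icc (min 0 n) (max 0 n) := by
    rw [Finset.mem_Icc]
    constructor <;> omega
  have hmax : max (h (min 0 n)) (h (max 0 n)) = h n := by
    rcases le_total 0 n with hn | hn <;> simp [hn, hmin n]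
  have hup := le_max_add_of_forall_exists_lt hh
    (fun n => (hgain n).imp fun m hm => ⟨hm.1, by linarith [hm.2]⟩) htJ
  rw [hmax] at hup
  have hLi : (L : ℝ) / (2 * N) ≤ i + 1 := by
    rw [div_le_iff₀ (by positivity)]
    have : L < i * (2 * N) + 2 * N := Nat.lt_div_mul_add (by positivity)
    exact_mod_cast (by rw [add_mul, one_mul]; omega : L ≤ (i + 1) * (2 * N))
  calc h 0 + κ / (2 * N) * L = h 0 + κ * (L / (2 * N)) := by ring
    _ ≤ h 0 + κ * (i + 1) := by gcongr
    _ ≤ h (min 0 n + (L / 2 : ℕ)) + i * κ + κ := by linarith [hmin (min 0 n + (L / 2 : ℕ))]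
    _ ≤ h n + (κ + K * N) := by linarith

end ScalarGrowth

open Real in
lemma abs_log_sub_log_le {x y : ℝ} {K : ℝ} (hx : 0 < x) (hy : 0 < y) (hxy : x ≤ exp K * y)
    (hyx : y ≤ exp K * x) : |log x - log y| ≤ K := by
  have key : ∀ {a b : ℝ}, 0 < a → 0 < b → a ≤ exp K * b → log a - log b ≤ K := fun ha hb hab => by
    have := Real.log_le_log ha hab
    rw [Real.log_mul (exp_pos K).ne' hb.ne', Real.log_exp] at this
    linarith
  exact abs_sub_le_iff.2 ⟨key hx hy hxy, key hy hx hyx⟩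

lemma IsCompact.exists_finset_forall_exists_le {X ι : Type*} [TopologicalSpace X] {s : Set X}
    (hs : IsCompact s) {f : ι → X → ℝ} (hf : ∀ i, Continuous (f i)) {a : ℝ}
    (h : ∀ x ∈ s, ∃ i, a < f i x) : ∃ t : Finset ι, ∃ b > a, ∀ x ∈ s, ∃ i ∈ t, b ≤ f i x := by
  classical
  let U : ι × ℕ → Set X := fun p => {x | a + 1 / (p.2 + 1) < f p.1 x}
  obtain ⟨t, ht⟩ := hs.elim_finite_subcover U (fun p => isOpen_lt continuous_const (hf p.1))
    fun x hx => by
      obtain ⟨i, hi⟩ := h x hx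
      obtain ⟨k, hk⟩ := exists_nat_one_div_lt (sub_pos.2 hi)
      exact Set.mem_iUnion.2 ⟨(i, k), show a + 1 / (k + 1) < f i x by linarith⟩
  refine ⟨t.image Prod.fst, a + 1 / (t.sup Prod.snd + 1), by simp; positivity, fun x hx => ?_⟩
  obtain ⟨p, hp, hpx⟩ := Set.mem_iUnion₂.1 (ht hx)
  refine ⟨p.1, Finset.mem_image_of_mem _ hp, ?_⟩
  have : (1 : ℝ) / (t.sup Prod.snd + 1) ≤ 1 / (p.2 + 1) := by
    gcongr; exact_mod_cast Finset.le_sup (f := Prod.snd) hp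
  linarith [show a + 1 / (p.2 + 1) < f p.1 x from hpx]

lemma exists_mul_norm_le_of_forall_norm_eq_one {𝕜 F G ι : Type*} [RCLike 𝕜] [NormedAddCommGroup F]
    [NormedSpace 𝕜 F] [SeminormedAddCommGroup G] [NormedSpace 𝕜 G] {t : Finset ι}
    (ht : t.Nonempty) {g : ι → F →L[𝕜] G} {c : ℝ} (h : ∀ v, ‖v‖ = 1 → ∃ i ∈ t, c ≤ ‖g i v‖)
    (v : F) : ∃ i ∈ t, c * ‖v‖ ≤ ‖g i v‖ := by
  rcases eq_or_ne v 0 with rfl | hv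
  · obtain ⟨i, hi⟩ := ht
    exact ⟨i, hi, by simp⟩
  have hv' : 0 < ‖v‖ := norm_pos_iff.2 hv
  obtain ⟨i, hi, hc⟩ := h ((‖v‖⁻¹ : 𝕜) • v) (by simp [norm_smul, hv'.ne'])
  refine ⟨i, hi, ?_⟩
  rw [map_smul, norm_smul, norm_inv, RCLike.norm_ofReal, abs_norm, le_inv_mul_iff₀ hv'] at hc
  rwa [mul_comm]

lemma exists_mul_opNorm_le_opNorm_comp {𝕜 E F G ι : Type*} [NontriviallyNormedField 𝕜]
    [SeminormedAddCommGroup E] [NormedSpace 𝕜 E] [SeminormedAddCommGroup F] [NormedSpace 𝕜 F]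
    [SeminormedAddCommGroup G] [NormedSpace 𝕜 G] {t : Finset ι} (ht : t.Nonempty)
    {g : ι → F →L[𝕜] G} {c : ℝ} (hc : 0 < c) (h : ∀ v, ∃ i ∈ t, c * ‖v‖ ≤ ‖g i v‖)
    (f : E →L[𝕜] F) : ∃ i ∈ t, c * ‖f‖ ≤ ‖(g i).comp f‖ := by
  obtain ⟨i, hi, hmax⟩ := t.exists_max_image (fun i => ‖(g i).comp f‖) ht
  refine ⟨i, hi, ?_⟩
  rw [← le_div_iff₀' hc]
  refine f.opNorm_le_bound (by positivity) fun x => ?_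
  obtain ⟨j, hj, hcj⟩ := h (f x)
  rw [div_mul_eq_mul_div, le_div_iff₀' hc]
  calc c * ‖f x‖ ≤ ‖g j (f x)‖ := hcj
    _ ≤ ‖(g j).comp f‖ * ‖x‖ := ((g j).comp f).le_opNorm x
    _ ≤ ‖(g i).comp f‖ * ‖x‖ := by gcongr; exact hmax j hj

lemma Continuous.matrix_nonsing_inv {X n 𝕜 : Type*} [TopologicalSpace X] [Fintype n]
    [DecidableEq n] [NormedField 𝕜] {f : X → Matrix n n 𝕜} (hf : Continuous f)
    (h : ∀ x, IsUnit (f x)) : Continuous fun x => (f x)⁻¹ := by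
  refine continuous_iff_continuousAt.2 fun x => (continuousAt_matrix_inv _ ?_).comp hf.continuousAt
  rw [Ring.inverse_eq_inv']
  exact continuousAt_inv₀ ((f x).isUnit_iff_isUnit_det.1 (h x)).ne_zero

lemma Matrix.continuous_toEuclideanCLM {n 𝕜 : Type*} [Fintype n] [DecidableEq n] [RCLike 𝕜] :
    Continuous (fun M : Matrix n n 𝕜 => Matrix.toEuclideanCLM (n := n) (𝕜 := 𝕜) M) :=
  LinearMap.continuous_of_finiteDimensional
    (Matrix.toEuclideanCLM (n := n) (𝕜 := 𝕜)).toAlgEquiv.toLinearMap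

lemma Homeomorph.coe_pow {X : Type*} [TopologicalSpace X] (f : X ≃ₜ X) (k : ℕ) :
    ⇑(f ^ k) = (⇑f)^[k] := by
  induction k with
  | zero => rfl
  | succ k ih => rw [pow_succ, Function.iterate_succ, ← ih]; rfl

lemma isUnit_of_norm_det_eq_one {n 𝕜 : Type*} [Fintype n] [DecidableEq n] [NormedField 𝕜]
    {M : Matrix n n 𝕜} (hM : ‖M.det‖ = 1) : IsUnit M :=
  M.isUnit_iff_isUnit_det.2 (isUnit_iff_ne_zero.2 (norm_ne_zero_iff.1 (by simp [hM])))

lemma opNorm_one : opNorm 1 = 1 := by simp [opNorm]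

lemma opNorm_mul_le (M N : M2) : opNorm (M * N) ≤ opNorm M * opNorm N := by
  simpa only [opNorm, map_mul] using norm_mul_le _ _

lemma opNorm_pos_of_isUnit {M : M2} (hM : IsUnit M) : 0 < opNorm M :=
  norm_pos_iff.2 <| (map_ne_zero_iff _ Matrix.toEuclideanCLM.injective).2 hM.ne_zero

lemma sq_norm_col_le_opNorm_sq (M : M2) (j : Fin 2) :
    ‖M 0 j‖ ^ 2 + ‖M 1 j‖ ^ 2 ≤ opNorm M ^ 2 := by
  set e : E2 := WithLp.toLp 2 (Pi.single j 1)
  have hcol : ‖mulV M e‖ ^ 2 = ‖M 0 j‖ ^ 2 + ‖M 1 j‖ ^ 2 := by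
    rw [mulV, Matrix.toEuclideanCLM_toLp, Matrix.mulVec_single_one, EuclideanSpace.norm_sq_eq,
      Fin.sum_univ_two]
    rfl
  have he : ‖e‖ = 1 := by simp [e]
  rw [← hcol]
  gcongr
  exact (Matrix.toEuclideanCLM (𝕜 := ℂ) M).le_opNorm e |>.trans_eq (by rw [he, mul_one]; rfl)

lemma norm_det_le_opNorm_sq (M : M2) : ‖M.det‖ ≤ opNorm M ^ 2 := by
  have h0 := sq_norm_col_le_opNorm_sq M 0
  have h1 := sq_norm_col_le_opNorm_sq M 1
  have hdet : ‖M.det‖ ≤ ‖M 0 0‖ * ‖M 1 1‖ + ‖M 0 1‖ * ‖M 1 0‖ := by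
    rw [Matrix.det_fin_two, ← norm_mul, ← norm_mul]; exact norm_sub_le _ _
  -- Cauchy–Schwarz: `(ad + bc)² ≤ (a² + c²)(b² + d²)`
  have hcs : (‖M 0 0‖ * ‖M 1 1‖ + ‖M 0 1‖ * ‖M 1 0‖) ^ 2 ≤ (opNorm M ^ 2) ^ 2 := by
    nlinarith [sq_nonneg (‖M 0 0‖ * ‖M 0 1‖ - ‖M 1 0‖ * ‖M 1 1‖),
      mul_le_mul h0 h1 (by positivity) (by positivity)]
  exact hdet.trans (abs_le_of_sq_le_sq' hcs (by positivity)).2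

lemma one_le_opNorm_of_one_le_norm_det {M : M2} (hM : 1 ≤ ‖M.det‖) : 1 ≤ opNorm M := by
  have := hM.trans (norm_det_le_opNorm_sq M)
  exact (one_le_sq_iff₀ (norm_nonneg _)).1 this

section Cocycle

variable (T : Ω ≃ₜ Ω) {A : Ω → M2}

lemma fwd_succ' (k : ℕ) (ω : Ω) : fwd T A (k + 1) ω = A ((T ^ k) ω) * fwd T A k ω := by
  induction k generalizing ω with
  | zero => simp [fwd]
  | succ k ih =>
    rw [fwd, ih, fwd, pow_succ, Homeomorph.mul_apply, mul_assoc]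

lemma coc_natCast (k : ℕ) (ω : Ω) : coc T A k ω = fwd T A k ω := by simp [coc]

lemma coc_neg_natCast (k : ℕ) (ω : Ω) :
    coc T A (-k) ω = (fwd T A k ((T⁻¹ ^ k) ω))⁻¹ := by
  rcases k with _ | k
  · simp [coc, fwd]
  · have h : ¬ (0 ≤ -((k + 1 : ℕ) : ℤ)) := by omega
    rw [coc, if_neg h, neg_neg, Int.toNat_natCast, Homeomorph.coe_pow]
    rfl

lemma coc_zero (ω : Ω) : coc T A 0 ω = 1 := by simp [coc, fwd]

lemma coc_succ (hunit : ∀ ω, IsUnit (A ω)) (n : ℤ) (ω : Ω) :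
    coc T A (n + 1) ω = A ((T ^ n) ω) * coc T A n ω := by
  rcases n with k | k
  · rw [Int.ofNat_eq_natCast, ← Nat.cast_succ, coc_natCast, coc_natCast, fwd_succ', zpow_natCast]
  · have hn : Int.negSucc k + 1 = -(k : ℤ) := by omega
    have hT : T ((T⁻¹ ^ (k + 1)) ω) = (T⁻¹ ^ k) ω := by
      rw [pow_succ', Homeomorph.mul_apply, Homeomorph.inv_apply, Homeomorph.apply_symm_apply]
    rw [hn, Int.negSucc_eq, ← Nat.cast_succ, coc_neg_natCast, coc_neg_natCast, fwd, hT,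
      Matrix.mul_inv_rev, zpow_neg, zpow_natCast, ← inv_pow,
      Matrix.mul_nonsing_inv_cancel_left _ _ ((A _).isUnit_iff_isUnit_det.1 (hunit _))]

lemma coc_sub_one (hunit : ∀ ω, IsUnit (A ω)) (n : ℤ) (ω : Ω) :
    coc T A (n - 1) ω = (A ((T ^ (n - 1)) ω))⁻¹ * coc T A n ω := by
  have h := coc_succ T hunit (n - 1) ω
  rw [sub_add_cancel] at h
  rw [h, Matrix.nonsing_inv_mul_cancel_left _ _ ((A _).isUnit_iff_isUnit_det.1 (hunit _))]

lemma coc_add (hunit : ∀ ω, IsUnit (A ω)) (m n : ℤ) (ω : Ω) :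
    coc T A (m + n) ω = coc T A m ((T ^ n) ω) * coc T A n ω := by
  induction m using Int.induction_on with
  | zero => rw [zero_add, coc_zero, one_mul]
  | succ k ih =>
    rw [add_right_comm, coc_succ T hunit, ih, coc_succ T hunit, ← Homeomorph.mul_apply, ← zpow_add,
      mul_assoc]
  | pred k ih =>
    rw [sub_add_eq_add_sub, coc_sub_one T hunit, ih, coc_sub_one T hunit, ← Homeomorph.mul_apply,
      ← zpow_add, mul_assoc, sub_add_eq_add_sub]

lemma isUnit_coc (hunit : ∀ ω, IsUnit (A ω)) (n : ℤ) (ω : Ω) : IsUnit (coc T A n ω) := by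
  induction n using Int.induction_on with
  | zero => simp [coc_zero]
  | succ k ih => rw [coc_succ T hunit]; exact (hunit _).mul ih
  | pred k ih =>
    rw [coc_sub_one T hunit]
    exact (Matrix.isUnit_nonsing_inv_iff.2 (hunit _)).mul ih

lemma norm_det_coc (hdet : ∀ ω, ‖(A ω).det‖ = 1) (n : ℤ) (ω : Ω) :
    ‖(coc T A n ω).det‖ = 1 := by
  have hunit : ∀ ω, IsUnit (A ω) := fun ω => isUnit_of_norm_det_eq_one (hdet ω)
  induction n using Int.induction_on with
  | zero => simp [coc_zero]
  | succ k ih => rw [coc_succ T hunit, Matrix.det_mul, norm_mul, hdet, ih, one_mul]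
  | pred k ih =>
    rw [coc_sub_one T hunit, Matrix.det_mul, Matrix.det_nonsing_inv,
      Ring.inverse_eq_inv', norm_mul, norm_inv, hdet, ih, inv_one, one_mul]

lemma continuous_coc (hA : Continuous A) (hunit : ∀ ω, IsUnit (A ω)) (n : ℤ) :
    Continuous fun ω => coc T A n ω := by
  induction n using Int.induction_on with
  | zero => simp only [coc_zero]; exact continuous_const
  | succ k ih =>
    simp only [coc_succ T hunit]
    exact (hA.comp (T ^ (k : ℤ)).continuous).matrix_mul ih
  | pred k ih =>
    simp only [coc_sub_one T hunit]
    exact ((hA.comp (T ^ (-(k : ℤ) - 1)).continuous).matrix_nonsing_inv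
      fun _ => hunit _).matrix_mul ih

open Real in
lemma lipschitzWith_log_opNorm_coc (hunit : ∀ ω, IsUnit (A ω)) {K : ℝ≥0}
    (hK : ∀ ω, opNorm (A ω) ≤ exp K ∧ opNorm (A ω)⁻¹ ≤ exp K) (ω : Ω) :
    LipschitzWith K fun n => log (opNorm (coc T A n ω)) := by
  refine lipschitzWith_of_dist_succ_le fun n => ?_
  have hpos : ∀ k, 0 < opNorm (coc T A k ω) := fun k =>
    opNorm_pos_of_isUnit (isUnit_coc T hunit k ω)
  set A' := A ((T ^ n) ω)
  have hsucc : coc T A (n + 1) ω = A' * coc T A n ω := coc_succ T hunit n ω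
  have hpred : coc T A n ω = A'⁻¹ * coc T A (n + 1) ω := by
    rw [hsucc, Matrix.nonsing_inv_mul_cancel_left _ _ (A'.isUnit_iff_isUnit_det.1 (hunit _))]
  rw [Real.dist_eq]
  refine abs_log_sub_log_le (hpos _) (hpos _) ?_ ?_
  · rw [hsucc]
    exact (opNorm_mul_le _ _).trans (by gcongr; exacts [(hpos _).le, (hK _).1])
  · conv_lhs => rw [hpred]
    exact (opNorm_mul_le _ _).trans (by gcongr; exacts [(hpos _).le, (hK _).2])

lemma exists_opNorm_le_exp [CompactSpace Ω] (hA : Continuous A) (hunit : ∀ ω, IsUnit (A ω)) :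
    ∃ K : ℝ≥0, ∀ ω, opNorm (A ω) ≤ Real.exp K ∧ opNorm (A ω)⁻¹ ≤ Real.exp K := by
  have hcont : Continuous fun ω => (Matrix.toEuclideanCLM (𝕜 := ℂ) (A ω),
      Matrix.toEuclideanCLM (𝕜 := ℂ) (A ω)⁻¹) :=
    (Matrix.continuous_toEuclideanCLM.comp hA).prodMk
      (Matrix.continuous_toEuclideanCLM.comp (hA.matrix_nonsing_inv hunit))
  obtain ⟨C, hC⟩ := isCompact_univ.exists_bound_of_continuousOn hcont.continuousOn
  have hCK : C ≤ Real.exp C.toNNReal := (Real.le_coe_toNNReal C).trans <|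
    (le_add_of_nonneg_right zero_le_one).trans (Real.add_one_le_exp _)
  refine ⟨C.toNNReal, fun ω => ?_⟩
  obtain ⟨h₁, h₂⟩ := norm_prod_le_iff.1 (hC ω trivial)
  exact ⟨h₁.trans hCK, h₂.trans hCK⟩

lemma exists_uniform_gain [CompactSpace Ω] (hA : Continuous A) (hunit : ∀ ω, IsUnit (A ω))
    (hnoss : ∀ (ω : Ω) (v : E2), ‖v‖ = 1 → ∃ n : ℤ, 1 < ‖mulV (coc T A n ω) v‖) :
    ∃ N : ℕ, 0 < N ∧ ∃ κ > 0, ∀ ω n, ∃ m : ℤ, m.natAbs ≤ N ∧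
      Real.log (opNorm (coc T A n ω)) + κ ≤ Real.log (opNorm (coc T A (n + m) ω)) := by
  have hcont : ∀ m, Continuous fun p : Ω × E2 => ‖mulV (coc T A m p.1) p.2‖ := fun m =>
    (((Matrix.continuous_toEuclideanCLM.comp (continuous_coc T hA hunit m)).comp
      continuous_fst).clm_apply continuous_snd).norm
  obtain ⟨t, c, hc, ht⟩ :=
    (isCompact_univ.prod (isCompact_sphere (0 : E2) 1)).exists_finset_forall_exists_le hcont
      fun p hp => hnoss p.1 p.2 (by simpa using hp.2)
  refine ⟨t.sup Int.natAbs + 1, by omega, Real.log c, Real.log_pos hc, fun ω n => ?_⟩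
  have hsphere : ∀ v : E2, ‖v‖ = 1 → ∃ m ∈ t, c ≤ ‖mulV (coc T A m ((T ^ n) ω)) v‖ :=
    fun v hv => ht ((T ^ n) ω, v) ⟨trivial, by simpa using hv⟩
  have hne : t.Nonempty := by
    obtain ⟨m, hm, -⟩ := hsphere (EuclideanSpace.single 0 1) (by simp)
    exact ⟨m, hm⟩
  obtain ⟨m, hm, hle⟩ := exists_mul_opNorm_le_opNorm_comp hne (by linarith)
    (exists_mul_norm_le_of_forall_norm_eq_one hne hsphere)
    (Matrix.toEuclideanCLM (𝕜 := ℂ) (coc T A n ω))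
  refine ⟨m, (Finset.le_sup (f := Int.natAbs) hm).trans (Nat.le_succ _), ?_⟩
  have hpos := opNorm_pos_of_isUnit (isUnit_coc T hunit n ω)
  rw [add_comm, ← Real.log_mul (by positivity) hpos.ne']
  refine Real.log_le_log (by positivity) ?_
  rw [add_comm, coc_add T hunit, opNorm, opNorm, map_mul]
  exact hle

end Cocycle

theorem no_SackerSell_implies_uniform_growth_general [CompactSpace Ω]
    (T : Ω ≃ₜ Ω) (A : Ω → M2) (hA : Continuous A)
    (hdet : ∀ ω, ‖(A ω).det‖ = 1)
    (hnoss : ∀ (ω : Ω) (v : E2), ‖v‖ = 1 → ∃ n : ℤ, 1 < ‖mulV (coc T A n ω) v‖) :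
    ∃ (C : ℝ) (lam : ℝ), 0 < C ∧ 1 < lam ∧
      ∀ (n : ℤ) (ω : Ω), C * lam ^ n.natAbs ≤ opNorm (coc T A n ω) := by
  have hunit : ∀ ω, IsUnit (A ω) := fun ω => isUnit_of_norm_det_eq_one (hdet ω)
  obtain ⟨K, hK⟩ := exists_opNorm_le_exp hA hunit
  obtain ⟨N, hN, κ, hκ, hgain⟩ := exists_uniform_gain T hA hunit hnoss
  refine ⟨Real.exp (-(κ + K * N)), Real.exp (κ / (2 * N)), Real.exp_pos _,
    Real.one_lt_exp_iff.2 (by positivity), fun n ω => ?_⟩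
  have hlog_nonneg : ∀ k, 0 ≤ Real.log (opNorm (coc T A k ω)) := fun k =>
    Real.log_nonneg (one_le_opNorm_of_one_le_norm_det (norm_det_coc T hdet k ω).ge)
  have hgrowth := add_mul_natAbs_le_of_forall_exists_add_le
    (lipschitzWith_log_opNorm_coc T hunit hK ω) hκ (hgain ω)
    (by simpa [coc_zero, opNorm_one] using hlog_nonneg) n
  simp only [coc_zero, opNorm_one, Real.log_one, zero_add] at hgrowth
  calc Real.exp (-(κ + K * N)) * Real.exp (κ / (2 * N)) ^ n.natAbs
      = Real.exp (κ / (2 * N) * n.natAbs - (κ + K * N)) := by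
        rw [← Real.exp_nat_mul, ← Real.exp_add]; ring_nf
    _ ≤ Real.exp (Real.log (opNorm (coc T A n ω))) := Real.exp_le_exp.2 (by linarith)
    _ = opNorm (coc T A n ω) := Real.exp_log (opNorm_pos_of_isUnit (isUnit_coc T hunit n ω))

/-- absence of Sacker–Sell solutions implies uniform exponential
growth: `‖Aⁿ(ω)‖ ≥ C λ^{|n|}` for all `n ∈ ℤ`, `ω ∈ Ω`. -/
theorem no_SackerSell_implies_uniform_growth [CompactSpace Ω]
    (T : Ω ≃ₜ Ω) (A : Ω → M2) (hA : Continuous A)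
    (hinv : ∀ ω, IsUnit (A ω)) (hdet : ∀ ω, ‖(A ω).det‖ = 1)
    (hnoss : ∀ (ω : Ω) (v : E2), ‖v‖ = 1 → ∃ n : ℤ, 1 < ‖mulV (coc T A n ω) v‖) :
    ∃ (C : ℝ) (lam : ℝ), 0 < C ∧ 1 < lam ∧
      ∀ (n : ℤ) (ω : Ω), C * lam ^ n.natAbs ≤ opNorm (coc T A n ω) :=
  no_SackerSell_implies_uniform_growth_general T A hA hdet hnoss

end
end

section
/- Let Ω, T, A be as in the setting of uniformly hyperbolic cocycles (Ω compact metric, T homeomorphism, A: Ω → GL(2,ℂ) continuous with |det A| ≡ 1). The set of pairs (T, A) for which the cocycle (T,A) admits no Sacker–Sell solution is open in Homeo(Ω) × C(Ω, G) with the uniform topologies. -/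
noncomputable section

variable {Ω : Type*} [MetricSpace Ω]

/-! If openness failed, there would be perturbations `(Tₖ, Aₖ) → (T, A)` uniformly, each with a
Sacker–Sell solution `(ωₖ, vₖ)`. By compactness of `Ω × S³` a subsequence of `(ωₖ, vₖ)` converges to
some `(ω, v)`. For each fixed `n` the cocycle matrix `Aₖⁿ(ωₖ)` converges to `Aⁿ(ω)` (for `n < 0`
because `Tₖ⁻¹ → T⁻¹` uniformly on the compact `Ω` and inversion is continuous at invertible
matrices), so `‖Aⁿ(ω) v‖ ≤ 1` for all `n`: a Sacker–Sell solution of `(T, A)`. -/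

open Filter Topology

section UniformLimits

variable {ι X : Type*} {p : Filter ι}

theorem tendstoUniformly_of_forall_dist_lt {Y : Type*} [PseudoMetricSpace Y] {F : ι → X → Y}
    {f : X → Y} {δ : ι → ℝ} (hδ : Tendsto δ p (𝓝 0)) (h : ∀ i x, dist (F i x) (f x) < δ i) :
    TendstoUniformly F f p :=
  Metric.tendstoUniformly_iff.2 fun ε hε =>
    (hδ.eventually (gt_mem_nhds hε)).mono fun i hi x => by rw [dist_comm]; exact (h i x).trans hi

theorem TendstoUniformly.tendsto_iterate_comp [UniformSpace X] {F : ι → X → X} {f : X → X}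
    (hF : TendstoUniformly F f p) (hf : Continuous f) {x : ι → X} {x₀ : X}
    (hx : Tendsto x p (𝓝 x₀)) (m : ℕ) :
    Tendsto (fun i => (F i)^[m] (x i)) p (𝓝 (f^[m] x₀)) := by
  induction m with
  | zero => simpa using hx
  | succ m ih =>
    simp only [Function.iterate_succ_apply']
    exact hF.tendsto_comp hf.continuousAt ih

/-- `f.symm` is uniformly continuous, and `(F i).symm y` is the point whose `F i`-image is `y`,
so its `f`-image is uniformly close to `y`. -/
theorem TendstoUniformly.homeomorph_symm [UniformSpace X] [CompactSpace X] {F : ι → X ≃ₜ X}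
    {f : X ≃ₜ X} (hF : TendstoUniformly (fun i => ⇑(F i)) f p) :
    TendstoUniformly (fun i => ⇑(F i).symm) f.symm p := by
  intro u hu
  have hsymm : UniformContinuous f.symm :=
    CompactSpace.uniformContinuous_of_continuous f.symm.continuous
  filter_upwards [hF _ (tendsto_swap_uniformity.comp hsymm hu)] with i hi y
  simpa using hi ((F i).symm y)

end UniformLimits

theorem continuousAt_matrix_inv_of_isUnit {n 𝕜 : Type*} [Fintype n] [DecidableEq n]
    [NormedField 𝕜] {M : Matrix n n 𝕜} (hM : IsUnit M) : ContinuousAt Inv.inv M :=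
  continuousAt_matrix_inv M <| by
    rw [Ring.inverse_eq_inv']
    exact continuousAt_inv₀ ((Matrix.isUnit_iff_isUnit_det M).1 hM).ne_zero

theorem tendstoUniformly_of_forall_opNorm_sub_lt {ι X : Type*} {p : Filter ι} {F : ι → X → M2}
    {f : X → M2} {δ : ι → ℝ} (hδ : Tendsto δ p (𝓝 0)) (h : ∀ i x, opNorm (F i x - f x) < δ i) :
    TendstoUniformly F f p := by
  -- `opNorm` is the norm of this scoped instance, whose uniformity is the entrywise one.
  open scoped Matrix.Norms.L2Operator in
  exact tendstoUniformly_of_forall_dist_lt hδ fun i x => by rw [dist_eq_norm]; exact h i x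

theorem continuous_mulV : Continuous fun q : M2 × E2 => mulV q.1 q.2 := by
  change Continuous fun q : M2 × E2 => WithLp.toLp 2 (q.1.mulVec (WithLp.ofLp q.2))
  fun_prop

def IsSackerSellSolution (T : Ω ≃ₜ Ω) (A : Ω → M2) (ω : Ω) (v : E2) : Prop :=
  ‖v‖ = 1 ∧ ∀ n : ℤ, ‖mulV (coc T A n ω) v‖ ≤ 1

section Perturbation

variable {ι : Type*} {p : Filter ι} {T : Ω ≃ₜ Ω} {A : Ω → M2} {Tk : ι → Ω ≃ₜ Ω}
  {Ak : ι → Ω → M2}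

theorem isUnit_fwd (hinv : ∀ ω, IsUnit (A ω)) (m : ℕ) (ω : Ω) : IsUnit (fwd T A m ω) := by
  induction m generalizing ω with
  | zero => exact isUnit_one
  | succ m ih => exact (ih (T ω)).mul (hinv ω)

theorem tendsto_fwd (hA : Continuous A) (hT : TendstoUniformly (fun i => ⇑(Tk i)) T p)
    (hAk : TendstoUniformly Ak A p) (m : ℕ) {x : ι → Ω} {x₀ : Ω} (hx : Tendsto x p (𝓝 x₀)) :
    Tendsto (fun i => fwd (Tk i) (Ak i) m (x i)) p (𝓝 (fwd T A m x₀)) := by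
  induction m generalizing x x₀ with
  | zero => exact tendsto_const_nhds
  | succ m ih =>
    exact (ih (hT.tendsto_comp T.continuous.continuousAt hx)).mul
      (hAk.tendsto_comp hA.continuousAt hx)

theorem tendsto_coc [CompactSpace Ω] (hA : Continuous A) (hinv : ∀ ω, IsUnit (A ω))
    (hT : TendstoUniformly (fun i => ⇑(Tk i)) T p) (hAk : TendstoUniformly Ak A p) (n : ℤ)
    {x : ι → Ω} {x₀ : Ω} (hx : Tendsto x p (𝓝 x₀)) :
    Tendsto (fun i => coc (Tk i) (Ak i) n (x i)) p (𝓝 (coc T A n x₀)) := by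
  unfold coc
  split_ifs
  · exact tendsto_fwd hA hT hAk _ hx
  · exact (continuousAt_matrix_inv_of_isUnit (isUnit_fwd hinv _ _)).tendsto.comp <|
      tendsto_fwd hA hT hAk _ <| hT.homeomorph_symm.tendsto_iterate_comp T.symm.continuous hx _

theorem IsSackerSellSolution.of_tendsto [CompactSpace Ω] [p.NeBot] (hA : Continuous A)
    (hinv : ∀ ω, IsUnit (A ω)) (hT : TendstoUniformly (fun i => ⇑(Tk i)) T p)
    (hAk : TendstoUniformly Ak A p) {ω : ι → Ω} {v : ι → E2} {ω₀ : Ω} {v₀ : E2}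
    (hω : Tendsto ω p (𝓝 ω₀)) (hv : Tendsto v p (𝓝 v₀))
    (hss : ∀ i, IsSackerSellSolution (Tk i) (Ak i) (ω i) (v i)) :
    IsSackerSellSolution T A ω₀ v₀ := by
  refine ⟨tendsto_nhds_unique (hv.norm.congr fun i => (hss i).1) tendsto_const_nhds, fun n => ?_⟩
  have hlim := (continuous_mulV.tendsto _).comp ((tendsto_coc hA hinv hT hAk n hω).prodMk_nhds hv)
  exact le_of_tendsto hlim.norm (Eventually.of_forall fun i => (hss i).2 n)

end Perturbation

theorem no_SackerSell_open_general [CompactSpace Ω]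
    (T : Ω ≃ₜ Ω) (A : Ω → M2) (hA : Continuous A)
    (hinv : ∀ ω, IsUnit (A ω))
    (hnoss : ∀ (ω : Ω) (v : E2), ‖v‖ = 1 → ∃ n : ℤ, 1 < ‖mulV (coc T A n ω) v‖) :
    ∃ δ : ℝ, 0 < δ ∧
      ∀ (T' : Ω ≃ₜ Ω) (A' : Ω → M2), Continuous A' →
        (∀ ω, IsUnit (A' ω)) → (∀ ω, ‖(A' ω).det‖ = 1) →
        (∀ ω, dist (T' ω) (T ω) < δ) →
        (∀ ω, opNorm (A' ω - A ω) < δ) →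
        ∀ (ω : Ω) (v : E2), ‖v‖ = 1 → ∃ n : ℤ, 1 < ‖mulV (coc T' A' n ω) v‖ := by
  by_contra! hcon
  choose Tk Ak _ _ _ hTk hAk ω v hv hss using
    fun k : ℕ => hcon (1 / (k + 1)) Nat.one_div_pos_of_nat
  obtain ⟨⟨ω₀, v₀⟩, -, θ, hθ, hlim⟩ :=
    (isCompact_univ.prod (isCompact_sphere (0 : E2) 1)).tendsto_subseq
      (x := fun k => (ω k, v k)) fun k => ⟨Set.mem_univ _, by simpa using hv k⟩
  have hδ : Tendsto (fun k => 1 / ((θ k : ℝ) + 1)) atTop (𝓝 0) :=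
    tendsto_one_div_add_atTop_nhds_zero_nat.comp hθ.tendsto_atTop
  have hT : TendstoUniformly (fun k => ⇑(Tk (θ k))) T atTop :=
    tendstoUniformly_of_forall_dist_lt hδ fun k => hTk (θ k)
  have hA' : TendstoUniformly (fun k => Ak (θ k)) A atTop :=
    tendstoUniformly_of_forall_opNorm_sub_lt hδ fun k => hAk (θ k)
  have hss₀ : IsSackerSellSolution T A ω₀ v₀ :=
    .of_tendsto hA hinv hT hA' hlim.fst_nhds hlim.snd_nhds fun k => ⟨hv (θ k), hss (θ k)⟩
  obtain ⟨n, hn⟩ := hnoss ω₀ v₀ hss₀.1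
  exact (hss₀.2 n).not_gt hn

/-- uniform hyperbolicity (equivalently, absence of Sacker–Sell
solutions) is open in `Homeo(Ω) × C(Ω, G)` with the uniform topologies: if
`(T,A)` has no Sacker–Sell solution, then every pair `(T',A')` uniformly
`δ`-close to `(T,A)` also has none. -/
theorem no_SackerSell_open [CompactSpace Ω]
    (T : Ω ≃ₜ Ω) (A : Ω → M2) (hA : Continuous A)
    (hinv : ∀ ω, IsUnit (A ω)) (hdet : ∀ ω, ‖(A ω).det‖ = 1)
    (hnoss : ∀ (ω : Ω) (v : E2), ‖v‖ = 1 → ∃ n : ℤ, 1 < ‖mulV (coc T A n ω) v‖) :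
    ∃ δ : ℝ, 0 < δ ∧
      ∀ (T' : Ω ≃ₜ Ω) (A' : Ω → M2), Continuous A' →
        (∀ ω, IsUnit (A' ω)) → (∀ ω, ‖(A' ω).det‖ = 1) →
        (∀ ω, dist (T' ω) (T ω) < δ) →
        (∀ ω, opNorm (A' ω - A ω) < δ) →
        ∀ (ω : Ω) (v : E2), ‖v‖ = 1 → ∃ n : ℤ, 1 < ‖mulV (coc T' A' n ω) v‖ :=
  no_SackerSell_open_general T A hA hinv hnoss

end
end
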